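/- arXiv:1612.02007 — 2 statements merged into one kernel-verified Lean document; each statement's English description precedes it below -/
import Mathlib

section
/- Let L ⊆ ℤ^14 be the set of integer tuples (a₀,a₁,a₂,a₃,a₄,b₀,b₁,b₂,b₃,b₄,c₀,c₁,c₂,c₃) satisfying the six compatibility relations a₀+a₂+a₄ = c₀+c₂, a₁+a₃+a₄ = c₁+c₃, a₀+a₃+a₄ = b₀+b₃+b₄, a₁+a₂+a₄ = b₁+b₂+b₄, b₀+b₂+b₄ = c₀+c₃, and b₁+b₃+b₄ = c₁+c₂. Then L is a free abelian group of rank 9 (i.e. L ≅ ℤ⁹). -/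
/-- The subgroup `L ⊆ ℤ¹⁴` of tuples `(a₀,…,a₄,b₀,…,b₄,c₀,…,c₃)`
(indexed as `v 0,…,v 4, v 5,…,v 9, v 10,…,v 13`) satisfying the six
compatibility relations of the wallpaper group `p4mm`. -/
def p4mmSolutions : AddSubgroup (Fin 14 → ℤ) where
  carrier := {v | v 0 + v 2 + v 4 = v 10 + v 12 ∧
                  v 1 + v 3 + v 4 = v 11 + v 13 ∧
                  v 0 + v 3 + v 4 = v 5 + v 8 + v 9 ∧
                  v 1 + v 2 + v 4 = v 6 + v 7 + v 9 ∧
                  v 5 + v 7 + v 9 = v 10 + v 13 ∧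
                  v 6 + v 8 + v 9 = v 11 + v 12}
  add_mem' := by
    intro a b ha hb
    simp only [Set.mem_setOf_eq, Pi.add_apply] at *
    omega
  zero_mem' := by
    refine ⟨?_, ?_, ?_, ?_, ?_, ?_⟩ <;> simp
  neg_mem' := by
    intro a ha
    simp only [Set.mem_setOf_eq, Pi.neg_apply] at *
    omega

/-- Parametrization of solutions by 9 free integers. -/
def p4mmPack (w : Fin 9 → ℤ) : Fin 14 → ℤ :=
  ![w 0, w 1, w 2, w 3, w 4, w 5, w 6,
    w 1 + w 2 + w 4 - w 6 - w 7,
    w 0 + w 3 + w 4 - w 5 - w 7,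
    w 7, w 8,
    w 3 - w 2 + w 6 - w 5 + w 8,
    w 0 + w 2 + w 4 - w 8,
    w 5 + w 1 + w 2 + w 4 - w 6 - w 8]

@[simp] lemma p4mmPack_0 (w : Fin 9 → ℤ) : p4mmPack w 0 = w 0 := rfl
@[simp] lemma p4mmPack_1 (w : Fin 9 → ℤ) : p4mmPack w 1 = w 1 := rfl
@[simp] lemma p4mmPack_2 (w : Fin 9 → ℤ) : p4mmPack w 2 = w 2 := rfl
@[simp] lemma p4mmPack_3 (w : Fin 9 → ℤ) : p4mmPack w 3 = w 3 := rfl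
@[simp] lemma p4mmPack_4 (w : Fin 9 → ℤ) : p4mmPack w 4 = w 4 := rfl
@[simp] lemma p4mmPack_5 (w : Fin 9 → ℤ) : p4mmPack w 5 = w 5 := rfl
@[simp] lemma p4mmPack_6 (w : Fin 9 → ℤ) : p4mmPack w 6 = w 6 := rfl
@[simp] lemma p4mmPack_7 (w : Fin 9 → ℤ) :
    p4mmPack w 7 = w 1 + w 2 + w 4 - w 6 - w 7 := rfl
@[simp] lemma p4mmPack_8 (w : Fin 9 → ℤ) :
    p4mmPack w 8 = w 0 + w 3 + w 4 - w 5 - w 7 := rfl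
@[simp] lemma p4mmPack_9 (w : Fin 9 → ℤ) : p4mmPack w 9 = w 7 := rfl
@[simp] lemma p4mmPack_10 (w : Fin 9 → ℤ) : p4mmPack w 10 = w 8 := rfl
@[simp] lemma p4mmPack_11 (w : Fin 9 → ℤ) :
    p4mmPack w 11 = w 3 - w 2 + w 6 - w 5 + w 8 := rfl
@[simp] lemma p4mmPack_12 (w : Fin 9 → ℤ) :
    p4mmPack w 12 = w 0 + w 2 + w 4 - w 8 := rfl
@[simp] lemma p4mmPack_13 (w : Fin 9 → ℤ) :
    p4mmPack w 13 = w 5 + w 1 + w 2 + w 4 - w 6 - w 8 := rfl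

lemma p4mmPack_mem (w : Fin 9 → ℤ) : p4mmPack w ∈ p4mmSolutions := by
  refine ⟨?_, ?_, ?_, ?_, ?_, ?_⟩ <;> simp <;> ring

/-- Projection extracting the 9 free coordinates. -/
def p4mmProj (v : Fin 14 → ℤ) : Fin 9 → ℤ :=
  ![v 0, v 1, v 2, v 3, v 4, v 5, v 6, v 9, v 10]

@[simp] lemma p4mmProj_0 (v : Fin 14 → ℤ) : p4mmProj v 0 = v 0 := rfl
@[simp] lemma p4mmProj_1 (v : Fin 14 → ℤ) : p4mmProj v 1 = v 1 := rfl
@[simp] lemma p4mmProj_2 (v : Fin 14 → ℤ) : p4mmProj v 2 = v 2 := rfl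
@[simp] lemma p4mmProj_3 (v : Fin 14 → ℤ) : p4mmProj v 3 = v 3 := rfl
@[simp] lemma p4mmProj_4 (v : Fin 14 → ℤ) : p4mmProj v 4 = v 4 := rfl
@[simp] lemma p4mmProj_5 (v : Fin 14 → ℤ) : p4mmProj v 5 = v 5 := rfl
@[simp] lemma p4mmProj_6 (v : Fin 14 → ℤ) : p4mmProj v 6 = v 6 := rfl
@[simp] lemma p4mmProj_7 (v : Fin 14 → ℤ) : p4mmProj v 7 = v 9 := rfl
@[simp] lemma p4mmProj_8 (v : Fin 14 → ℤ) : p4mmProj v 8 = v 10 := rfl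

/-- The solution group of the six `p4mm` compatibility relations is a free
abelian group of rank 9, i.e. it is isomorphic to `ℤ⁹`. -/
theorem p4mm_classification : Nonempty (p4mmSolutions ≃+ (Fin 9 → ℤ)) := by
  refine ⟨{ toFun := fun v => p4mmProj v.1
            invFun := fun w => ⟨p4mmPack w, p4mmPack_mem w⟩
            left_inv := ?_
            right_inv := ?_
            map_add' := ?_ }⟩
  · rintro ⟨v, h1, h2, h3, h4, h5, h6⟩
    apply Subtype.ext
    funext i
    fin_cases i <;> simp <;> omega
  · intro w
    funext i
    fin_cases i <;> simp
  · rintro ⟨v, _⟩ ⟨u, _⟩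
    funext i
    fin_cases i <;> rfl
end

section
/- Let H be an n×n complex matrix and let A, B be invertible n×n complex matrices with AB = −BA, HA = AH, and HB = BH. Then for every complex number λ, the eigenspace ker(H − λ·1) has even dimension. -/
/-- If an `n × n` complex matrix `H` commutes with two invertible matrices
`A`, `B` that anticommute with each other (`AB = −BA`), then every
eigenspace `ker (H − λ·1)` of `H` has even dimension. -/
theorem eigenspace_even_dim_of_anticommuting_symmetries (n : ℕ)
    (H A B : Matrix (Fin n) (Fin n) ℂ) (hA : IsUnit A) (hB : IsUnit B)
    (hAB : A * B = -(B * A)) (hHA : H * A = A * H) (hHB : H * B = B * H)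
    (lam : ℂ) :
    Even (Module.finrank ℂ (Module.End.eigenspace (Matrix.toLin' H) lam)) := by
  set V := Module.End.eigenspace (Matrix.toLin' H) lam with hV
  -- invariance of the eigenspace under any matrix commuting with H
  have hmaps : ∀ M : Matrix (Fin n) (Fin n) ℂ, H * M = M * H →
      ∀ x ∈ V, Matrix.toLin' M x ∈ V := by
    intro M hM x hx
    rw [hV, Module.End.mem_eigenspace_iff] at hx ⊢
    have h1 : Matrix.toLin' (H * M) x = Matrix.toLin' (M * H) x := by rw [hM]
    rw [Matrix.toLin'_mul, Matrix.toLin'_mul] at h1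
    simp only [LinearMap.comp_apply] at h1
    rw [h1, hx, map_smul]
  -- injectivity of the maps induced by invertible matrices
  have hinj : ∀ M : Matrix (Fin n) (Fin n) ℂ, IsUnit M →
      Function.Injective (Matrix.toLin' M) := by
    intro M hM
    have hdet : IsUnit M.det := (Matrix.isUnit_iff_isUnit_det M).mp hM
    have hN2 : M⁻¹ * M = 1 := Matrix.nonsing_inv_mul M hdet
    intro x y hxy
    have : Matrix.toLin' M⁻¹ (Matrix.toLin' M x) = Matrix.toLin' M⁻¹ (Matrix.toLin' M y) := by
      rw [hxy]
    simpa [← LinearMap.comp_apply, ← Matrix.toLin'_mul, hN2] using this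
  -- restricted endomorphisms on V
  set fA : V →ₗ[ℂ] V := (Matrix.toLin' A).restrict (hmaps A hHA) with hfA
  set fB : V →ₗ[ℂ] V := (Matrix.toLin' B).restrict (hmaps B hHB) with hfB
  have hfAinj : Function.Injective fA := by
    intro x y hxy
    apply Subtype.ext
    exact hinj A hA (congrArg Subtype.val hxy)
  have hfBinj : Function.Injective fB := by
    intro x y hxy
    apply Subtype.ext
    exact hinj B hB (congrArg Subtype.val hxy)
  have hdet : ∀ f : V →ₗ[ℂ] V, Function.Injective f → LinearMap.det f ≠ 0 := by
    intro f hf h0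
    have := LinearMap.bot_lt_ker_of_det_eq_zero h0
    rw [LinearMap.ker_eq_bot.mpr hf] at this
    exact lt_irrefl _ this
  -- anticommutation of the restrictions
  have hcomm : fA ∘ₗ fB = -(fB ∘ₗ fA) := by
    refine LinearMap.ext fun x => Subtype.ext ?_
    have h1 : Matrix.toLin' (A * B) (x : Fin n → ℂ) =
        Matrix.toLin' (-(B * A)) (x : Fin n → ℂ) := by rw [hAB]
    simp only [Matrix.toLin'_mul, LinearMap.comp_apply, map_neg] at h1 ⊢
    simpa [hfA, hfB, LinearMap.restrict_apply] using h1
  -- determinant computation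
  have hd : LinearMap.det (fA ∘ₗ fB) = LinearMap.det (-(fB ∘ₗ fA)) := by rw [hcomm]
  have hneg : -(fB ∘ₗ fA) = (-1 : ℂ) • (fB ∘ₗ fA) := by ext x; simp
  rw [LinearMap.det_comp, hneg, LinearMap.det_smul, LinearMap.det_comp] at hd
  have hne : LinearMap.det fA * LinearMap.det fB ≠ 0 :=
    mul_ne_zero (hdet fA hfAinj) (hdet fB hfBinj)
  have hpow : (1 : ℂ) = (-1 : ℂ) ^ Module.finrank ℂ V := by
    have h1 : (1 : ℂ) * (LinearMap.det fA * LinearMap.det fB) =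
        (-1 : ℂ) ^ Module.finrank ℂ V * (LinearMap.det fA * LinearMap.det fB) := by
      linear_combination hd
    exact mul_right_cancel₀ hne h1
  rcases Nat.even_or_odd (Module.finrank ℂ V) with he | ho
  · exact he
  · exfalso
    rw [ho.neg_one_pow] at hpow
    norm_num at hpow
end
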